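/- arXiv:math/9910127 — 2 statements merged into one kernel-verified Lean document; each statement's English description precedes it below -/
import Mathlib

section
/- Let p > q > 0 be coprime integers with Bezout chain (p₀, q₀), …, (p_n, q_n), set dᵢ = p_{i−1} − pᵢ for 1 ≤ i ≤ n, and let r₀, …, r_k be integers with rᵢ ≤ −2 for all i and [r₀, …, r_k]⁻ = −p/q. Then the sequence (d₁, …, d_n) is weakly decreasing, and {1, …, n} is partitioned into consecutive intervals I_k, I_{k−1}, …, I₀ (in this order, some possibly empty) with |I_k| = −r_k − 1 and |I_j| = −r_j − 2 for 0 ≤ j < k, such that dᵢ is constant on each interval and the constant values on distinct nonempty intervals are pairwise distinct (strictly decreasing from I_k to I₀). -/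
/-!
Write `aᵢ = -rᵢ ≥ 2` and `M_a (x, y) = (a x - y, x)`, a matrix of `SL₂(ℤ)`, so that
`p / q = [a₀, …, a_k]⁻` means `(p, q) = M_{a₀} ⋯ M_{a_k} (1, 0)`. Since `M_a` preserves the
Bezout relation, the Bezout chain of `M_a (x, y)` is the image of the chain of `(x, y)`, which ends
at `M_a (1, 1) = (a - 1, 1)`, followed by `a - 2` unit steps down to `(1, 1)`. Inductively, the
chain splits into blocks of sizes `a_k - 1, a_{k-1} - 2, …, a₀ - 2`, and on the `j`-th block the
step `(p_{i-1} - p_i, q_{i-1} - q_i)` is the convergent vector `M_{a₀} ⋯ M_{a_{j-1}} (1, 0)`, whose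
first coordinate grows strictly with `j`. Weak monotonicity of `d` holds along any Bezout chain:
two consecutive Bezout relations give `p_{i-1} + p_{i+1} = t pᵢ` with `t ≥ 2`.
-/

/-- Negative continued fraction value `[r₀, …, r_k]⁻`:
`[r_k]⁻ = r_k` and `[r_j, …, r_k]⁻ = r_j − 1/[r_{j+1}, …, r_k]⁻`. -/
def ncf : List ℤ → ℚ
  | [] => 0
  | [r] => (r : ℚ)
  | r :: rest => (r : ℚ) - 1 / ncf rest

/-- `(p′, q′)` is the Bezout successor of `(p, q)`:
`p q′ − q p′ = 1`, `0 < p′ < p`, `0 < q′ ≤ q`. -/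
def BezoutNext (p q p' q' : ℤ) : Prop :=
  p * q' - q * p' = 1 ∧ 0 < p' ∧ p' < p ∧ 0 < q' ∧ q' ≤ q

/-- `P 0 = (p, q), …, P n = (1, 1)` is the Bezout chain of `(p, q)`: each step
is the Bezout successor, and `(1, 1)` is reached exactly at step `n`. -/
def IsBezoutChain (p q : ℤ) (n : ℕ) (P : ℕ → ℤ × ℤ) : Prop :=
  P 0 = (p, q) ∧ P n = (1, 1) ∧ (∀ i < n, P i ≠ (1, 1)) ∧
  ∀ i < n, BezoutNext (P i).1 (P i).2 (P (i + 1)).1 (P (i + 1)).2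

def ncfStep (a : ℤ) (v : ℤ × ℤ) : ℤ × ℤ := (a * v.1 - v.2, v.1)

lemma ncfStep_sub (a : ℤ) (u v : ℤ × ℤ) : ncfStep a (u - v) = ncfStep a u - ncfStep a v := by
  ext <;> simp only [ncfStep, Prod.fst_sub, Prod.snd_sub]
  ring

/-- `ncfVec r j = (x, y)` with `x / y = [-r 0, …, -r (j-1)]⁻`, the `j`-th convergent. -/
def ncfVec : (ℕ → ℤ) → ℕ → ℤ × ℤ
  | _, 0 => (1, 0)
  | r, j + 1 => ncfStep (-r 0) (ncfVec (fun i => r (i + 1)) j)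

lemma ncfVec_succ (r : ℕ → ℤ) (j : ℕ) :
    ncfVec r (j + 1) = ncfStep (-r 0) (ncfVec (fun i => r (i + 1)) j) := rfl

lemma ncfVec_snd_lt_fst (j : ℕ) (r : ℕ → ℤ) (hr : ∀ i < j, r i ≤ -2) :
    0 ≤ (ncfVec r j).2 ∧ (ncfVec r j).2 < (ncfVec r j).1 := by
  induction j generalizing r with
  | zero => simp [ncfVec]
  | succ j ih =>
    obtain ⟨h0, hlt⟩ := ih _ fun i hi => hr (i + 1) (by omega)
    have := hr 0 j.succ_pos
    simp only [ncfVec, ncfStep]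
    constructor <;> nlinarith

lemma ncfVec_succ_sub (j : ℕ) (r : ℕ → ℤ) (hr : ∀ i ≤ j, r i ≤ -2) :
    0 < (ncfVec r (j + 1) - ncfVec r j).2 ∧
      (ncfVec r (j + 1) - ncfVec r j).2 ≤ (ncfVec r (j + 1) - ncfVec r j).1 := by
  induction j generalizing r with
  | zero =>
    have := hr 0 le_rfl
    simp only [ncfVec, ncfStep, Prod.fst_sub, Prod.snd_sub]
    omega
  | succ j ih =>
    obtain ⟨hpos, hle⟩ := ih _ fun i hi => hr (i + 1) (by omega)
    have := hr 0 j.succ.zero_le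
    rw [ncfVec_succ r (j + 1), ncfVec_succ r j, ← ncfStep_sub]
    simp only [ncfStep]
    constructor <;> nlinarith

lemma ncfVec_fst_strictMonoOn (k : ℕ) (r : ℕ → ℤ) (hr : ∀ i < k, r i ≤ -2) :
    StrictMonoOn (fun j => (ncfVec r j).1) (Set.Iic k) :=
  strictMonoOn_Iic_of_lt_succ fun j hj => by
    obtain ⟨hpos, hle⟩ := ncfVec_succ_sub j r fun i hi => hr i (by omega)
    simp only [Prod.fst_sub, Prod.snd_sub, Order.succ_eq_add_one] at hpos hle ⊢
    omega

lemma isCoprime_ncfVec (j : ℕ) (r : ℕ → ℤ) : IsCoprime (ncfVec r j).1 (ncfVec r j).2 := by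
  induction j generalizing r with
  | zero => exact isCoprime_one_left
  | succ j ih => exact IsCoprime.mul_sub_right_left_iff.mpr (ih _).symm

lemma ncf_cons {a : ℤ} {l : List ℤ} (hl : l ≠ []) : ncf (a :: l) = a - 1 / ncf l := by
  obtain ⟨b, l, rfl⟩ := List.exists_cons_of_ne_nil hl
  rfl

lemma ncf_ofFn (k : ℕ) (r : ℕ → ℤ) (hr : ∀ i ≤ k, r i ≤ -2) :
    ncf (List.ofFn fun i : Fin (k + 1) => r i.1) =
      -((ncfVec r (k + 1)).1 : ℚ) / (ncfVec r (k + 1)).2 := by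
  induction k generalizing r with
  | zero => simp [ncf, ncfVec, ncfStep]
  | succ k ih =>
    have hx : ((ncfVec (fun i => r (i + 1)) (k + 1)).1 : ℚ) ≠ 0 := by
      have := (ncfVec_snd_lt_fst (k + 1) _ fun i hi => hr (i + 1) (by omega))
      exact_mod_cast (by omega : (ncfVec (fun i => r (i + 1)) (k + 1)).1 ≠ 0)
    rw [List.ofFn_succ, ncf_cons (by simp)]
    simp only [Fin.val_zero, Fin.val_succ]
    rw [ih _ fun i hi => hr (i + 1) (by omega)]
    simp only [ncfVec_succ r, ncfStep]
    push_cast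
    field_simp
    ring

lemma ncfVec_eq_of_ncf_eq {k : ℕ} {r : ℕ → ℤ} (hr : ∀ i ≤ k, r i ≤ -2) {p q : ℤ} (hq : 0 < q)
    (hco : Int.gcd p q = 1) (hval : ncf (List.ofFn fun i : Fin (k + 1) => r i.1) = -(p : ℚ) / q) :
    ncfVec r (k + 1) = (p, q) := by
  have hpos := ncfVec_snd_lt_fst k (fun i => r (i + 1)) fun i hi => hr (i + 1) (by omega)
  have hdiv : ((ncfVec r (k + 1)).1 : ℚ) / (ncfVec r (k + 1)).2 = p / q := by
    rw [← neg_inj, ← neg_div, ← neg_div, ← ncf_ofFn k r hr, hval]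
  obtain ⟨hx, hy⟩ := Rat.div_int_inj (by simp only [ncfVec_succ, ncfStep]; omega) hq
    (Int.isCoprime_iff_gcd_eq_one.mp (isCoprime_ncfVec _ _)) hco hdiv
  exact Prod.ext hx hy

namespace BezoutNext

lemma unique {p q a b a' b' : ℤ} (h : BezoutNext p q a b) (h' : BezoutNext p q a' b') :
    a = a' ∧ b = b' := by
  obtain ⟨hdet, -, -, hb, hbq⟩ := h
  obtain ⟨hdet', -, -, hb', hbq'⟩ := h'
  have hq : 0 < q := hb.trans_le hbq
  -- `q ∣ p (b - b')` with `p` prime to `q`, while `|b - b'| < q`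
  have hcop : IsCoprime q p := ⟨-a, b, by linarith⟩
  have hdvd : q ∣ b - b' := hcop.dvd_of_dvd_mul_left ⟨a - a', by linear_combination hdet - hdet'⟩
  obtain ⟨t, ht⟩ := hdvd
  have ht0 : t = 0 := by nlinarith
  obtain rfl : b = b' := by rwa [ht0, mul_zero, sub_eq_zero] at ht
  exact ⟨mul_left_cancel₀ hq.ne' (by linarith), rfl⟩

lemma snd_le_fst {p q p' q' : ℤ} (h : BezoutNext p q p' q') (hqp : q ≤ p) : q' ≤ p' := by
  obtain ⟨hdet, hp', hpp, hq', -⟩ := h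
  nlinarith

lemma fst_sub_le {p₀ q₀ p₁ q₁ p₂ q₂ : ℤ} (h₀ : BezoutNext p₀ q₀ p₁ q₁)
    (h₁ : BezoutNext p₁ q₁ p₂ q₂) : p₁ - p₂ ≤ p₀ - p₁ := by
  obtain ⟨hdet₀, hp₁, hp₀, -, -⟩ := h₀
  obtain ⟨hdet₁, hp₂, -, -, -⟩ := h₁
  have hcop : IsCoprime p₁ q₁ := ⟨q₂, -p₂, by linarith⟩
  obtain ⟨t, ht⟩ : p₁ ∣ p₀ + p₂ :=
    hcop.dvd_of_dvd_mul_right ⟨q₀ + q₂, by linear_combination hdet₀ - hdet₁⟩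
  have : 2 ≤ t := by nlinarith
  nlinarith

lemma map_ncfStep {x y x' y' : ℤ} (h : BezoutNext x y x' y') (hyx : y ≤ x) {a : ℤ} (ha : 2 ≤ a) :
    BezoutNext (ncfStep a (x, y)).1 (ncfStep a (x, y)).2 (ncfStep a (x', y')).1
      (ncfStep a (x', y')).2 := by
  have hy'x' := h.snd_le_fst hyx
  obtain ⟨hdet, hx', hxx, hy', -⟩ := h
  have hdiff : y - y' < x - x' := by nlinarith
  refine ⟨by simp only [ncfStep]; linear_combination hdet, ?_, ?_, hx', hxx.le⟩ <;>
    simp only [ncfStep] <;> nlinarith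

lemma unit_step {t : ℤ} (ht : 0 < t) : BezoutNext (t + 1) 1 t 1 :=
  ⟨by ring, ht, by omega, one_pos, le_rfl⟩

end BezoutNext

namespace IsBezoutChain

variable {p q : ℤ} {n : ℕ} {C : ℕ → ℤ × ℤ}

lemma snd_le_fst (h : IsBezoutChain p q n C) (hqp : q ≤ p) : ∀ i ≤ n, (C i).2 ≤ (C i).1 := by
  intro i hi
  induction i with
  | zero => simpa [h.1] using hqp
  | succ i ih => exact (h.2.2.2 i hi).snd_le_fst (ih (by omega))

lemma one_lt_fst (h : IsBezoutChain p q n C) {i : ℕ} (hi : i < n) : 1 < (C i).1 := by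
  obtain ⟨-, hpos, hlt, -⟩ := h.2.2.2 i hi
  omega

lemma fst_sub_le (h : IsBezoutChain p q n C) {i : ℕ} (hi : 1 ≤ i) (hin : i + 1 ≤ n) :
    (C i).1 - (C (i + 1)).1 ≤ (C (i - 1)).1 - (C i).1 := by
  have hstep := h.2.2.2 (i - 1) (by omega)
  rw [Nat.sub_add_cancel hi] at hstep
  exact hstep.fst_sub_le (h.2.2.2 i (by omega))

lemma unique {m : ℕ} {P : ℕ → ℤ × ℤ} (hC : IsBezoutChain p q n C)
    (hP : IsBezoutChain p q m P) : n = m ∧ ∀ i ≤ n, C i = P i := by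
  have hagree : ∀ i ≤ min n m, C i = P i := by
    intro i hi
    induction i with
    | zero => rw [hC.1, hP.1]
    | succ i ih =>
      have hstep := hC.2.2.2 i (by omega)
      rw [ih (by omega)] at hstep
      obtain ⟨h1, h2⟩ := hstep.unique (hP.2.2.2 i (by omega))
      exact Prod.ext h1 h2
  have hnm : n = m := by
    by_contra hne
    rcases Nat.lt_or_gt_of_ne hne with hlt | hlt
    · exact hP.2.2.1 n hlt (hagree n (by omega) ▸ hC.2.1)
    · exact hC.2.2.1 m hlt ((hagree m (by omega)).symm ▸ hP.2.1)
  exact ⟨hnm, fun i hi => hagree i (by omega)⟩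

end IsBezoutChain

/-- The Bezout chain of `ncfStep (m + 2) v`: the image under `ncfStep (m + 2)` of the chain of
`v`, which ends at `ncfStep (m + 2) (1, 1) = (m + 1, 1)`, followed by `m` unit steps. -/
def extendChain (m n : ℕ) (C : ℕ → ℤ × ℤ) (i : ℕ) : ℤ × ℤ :=
  if i ≤ n then ncfStep (m + 2) (C i) else ((m : ℤ) + 1 + n - i, 1)

section extendChain

variable {m n : ℕ} {C : ℕ → ℤ × ℤ}

lemma extendChain_of_le {i : ℕ} (hi : i ≤ n) : extendChain m n C i = ncfStep (m + 2) (C i) :=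
  if_pos hi

lemma extendChain_of_ge (hCn : C n = (1, 1)) {i : ℕ} (hi : n ≤ i) :
    extendChain m n C i = ((m : ℤ) + 1 + n - i, 1) := by
  unfold extendChain
  split_ifs with h
  · obtain rfl : i = n := by omega
    simp only [hCn, ncfStep, Prod.mk.injEq, and_true]
    ring
  · rfl

lemma extendChain_sub_of_le {i : ℕ} (hi : i ≤ n) :
    extendChain m n C (i - 1) - extendChain m n C i = ncfStep (m + 2) (C (i - 1) - C i) := by
  rw [extendChain_of_le (by omega), extendChain_of_le hi, ncfStep_sub]

lemma extendChain_sub_of_lt (hCn : C n = (1, 1)) {i : ℕ} (hi : n < i) :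
    extendChain m n C (i - 1) - extendChain m n C i = (1, 0) := by
  rw [extendChain_of_ge hCn (by omega), extendChain_of_ge hCn hi.le]
  ext <;> simp only [Prod.fst_sub, Prod.snd_sub]
  · push_cast [Nat.cast_sub (by omega : 1 ≤ i)]
    ring
  · ring

lemma IsBezoutChain.extendChain {v : ℤ × ℤ} (h : IsBezoutChain v.1 v.2 n C) (hv : v.2 ≤ v.1)
    (m : ℕ) :
    IsBezoutChain (ncfStep (m + 2) v).1 (ncfStep (m + 2) v).2 (n + m) (extendChain m n C) := by
  have hCn := h.2.1
  refine ⟨?_, ?_, fun i hi => ?_, fun i hi => ?_⟩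
  · rw [extendChain_of_le (Nat.zero_le n), h.1]
  · rw [extendChain_of_ge hCn (by omega)]
    simp only [Nat.cast_add, Prod.mk.injEq, and_true]
    ring
  · rcases lt_or_ge i n with hin | hni
    · have := h.one_lt_fst hin
      rw [extendChain_of_le hin.le]
      simp only [ncfStep, ne_eq, Prod.mk.injEq, not_and]
      omega
    · rw [extendChain_of_ge hCn hni]
      simp only [ne_eq, Prod.mk.injEq, and_true]
      omega
  · rcases lt_or_ge i n with hin | hni
    · rw [extendChain_of_le hin.le, extendChain_of_le hin]
      exact (h.2.2.2 i hin).map_ncfStep (h.snd_le_fst hv i hin.le) (by omega)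
    · rw [extendChain_of_ge hCn hni, extendChain_of_ge hCn (by omega)]
      convert BezoutNext.unit_step (t := m + n - i) (by omega) using 1 <;> push_cast <;> ring

end extendChain

theorem exists_isBezoutChain_blocks (k : ℕ) (r : ℕ → ℤ) (hr : ∀ i ≤ k, r i ≤ -2) :
    ∃ (n : ℕ) (C : ℕ → ℤ × ℤ) (c : ℕ → ℕ),
      IsBezoutChain (ncfVec r (k + 1)).1 (ncfVec r (k + 1)).2 n C ∧
      c (k + 1) = 0 ∧ c 0 = n ∧ (∀ j, c j ≤ n) ∧
      (∀ j ≤ k, (c j : ℤ) = c (j + 1) + (if j = k then -r k - 1 else -r j - 2)) ∧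
      ∀ j ≤ k, ∀ i, c (j + 1) < i → i ≤ c j → C (i - 1) - C i = ncfVec r j := by
  induction k generalizing r with
  | zero =>
    obtain ⟨m, hm⟩ : ∃ m : ℕ, -r 0 = m + 1 := ⟨(-r 0 - 1).toNat, by have := hr 0 le_rfl; omega⟩
    have hC : IsBezoutChain 1 1 0 fun _ => (1, 1) := ⟨rfl, rfl, by simp, by simp⟩
    have hv : ncfVec r 1 = ncfStep (m + 2) (1, 1) := by
      simp only [ncfVec, ncfStep, hm]
      ext <;> simp only [mul_one, sub_zero]
      ring
    refine ⟨0 + m, _, fun | 0 => m | _ + 1 => 0, hv ▸ hC.extendChain le_rfl m, rfl,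
      (zero_add m).symm, fun j => ?_, fun j hj => ?_, fun j hj i hlo hhi => ?_⟩
    · rcases j with _ | j <;> simp
    · obtain rfl : j = 0 := by omega
      simp only [↓reduceIte, Nat.cast_zero, zero_add]
      omega
    · obtain rfl : j = 0 := by omega
      exact extendChain_sub_of_lt rfl hlo
  | succ k ih =>
    obtain ⟨nt, Ct, ct, hCt, hct_last, hct0, hct_le, hsize, hdiff⟩ :=
      ih (fun i => r (i + 1)) fun i hi => hr (i + 1) (by omega)
    obtain ⟨m, hm⟩ : ∃ m : ℕ, -r 0 = m + 2 := ⟨(-r 0 - 2).toNat, by have := hr 0 (by omega); omega⟩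
    have hv := (ncfVec_snd_lt_fst (k + 1) _ fun i hi => hr (i + 1) (by omega)).2.le
    refine ⟨nt + m, extendChain m nt Ct, fun | 0 => nt + m | j + 1 => ct j, ?_, hct_last, rfl,
      fun j => ?_, fun j hj => ?_, fun j hj i hlo hhi => ?_⟩
    · rw [ncfVec_succ, hm]
      exact hCt.extendChain hv m
    · rcases j with _ | j
      · exact le_rfl
      · exact (hct_le j).trans (Nat.le_add_right nt m)
    · rcases j with _ | j
      · simp only [hct0, k.succ_ne_zero.symm, ↓reduceIte]
        omega
      · simpa using hsize j (by omega)
    · rcases j with _ | j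
      · change ct 0 < i at hlo
        rw [hct0] at hlo
        exact extendChain_sub_of_lt hCt.2.1 hlo
      · change ct (j + 1) < i at hlo
        change i ≤ ct j at hhi
        rw [extendChain_sub_of_le (hhi.trans (hct_le j)), hdiff j (by omega) i hlo hhi,
          ncfVec_succ, hm]

theorem stmt8_general (p q : ℤ) (hq : 0 < q) (hco : Int.gcd p q = 1)
    (n : ℕ) (P : ℕ → ℤ × ℤ) (hchain : IsBezoutChain p q n P)
    (d : ℕ → ℤ) (hd : ∀ i, 1 ≤ i → i ≤ n → d i = (P (i - 1)).1 - (P i).1)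
    (k : ℕ) (r : ℕ → ℤ) (hr : ∀ i ≤ k, r i ≤ -2)
    (hval : ncf (List.ofFn fun i : Fin (k + 1) => r i.1) = -(p : ℚ) / (q : ℚ)) :
    (∀ i, 1 ≤ i → i + 1 ≤ n → d (i + 1) ≤ d i) ∧
    ∃ c : ℕ → ℕ, ∃ v : ℕ → ℤ,
      c (k + 1) = 0 ∧ c 0 = n ∧
      (∀ j ≤ k, (c j : ℤ) = (c (j + 1) : ℤ) +
        (if j = k then -r k - 1 else -r j - 2)) ∧
      (∀ j ≤ k, ∀ i, c (j + 1) < i → i ≤ c j → d i = v j) ∧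
      (∀ j j', j ≤ k → j' < j →
        c (j + 1) < c j → c (j' + 1) < c j' → v j' < v j) := by
  refine ⟨fun i hi hin => ?_, ?_⟩
  · rw [hd (i + 1) (by omega) hin, hd i hi (by omega), Nat.add_sub_cancel]
    exact hchain.fst_sub_le hi hin
  obtain ⟨n', C, c, hC, hc_last, hc0, hc_le, hsize, hdiff⟩ := exists_isBezoutChain_blocks k r hr
  rw [ncfVec_eq_of_ncf_eq hr hq hco hval] at hC
  obtain ⟨rfl, hCP⟩ := hC.unique hchain
  refine ⟨c, fun j => (ncfVec r j).1, hc_last, hc0, hsize, fun j hj i hlo hhi => ?_,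
    fun j j' hj hj' _ _ =>
      ncfVec_fst_strictMonoOn k r (fun i hi => hr i hi.le) (by simp only [Set.mem_Iic]; omega) hj hj'⟩
  have hin := hhi.trans (hc_le j)
  rw [hd i (by omega) hin, ← hCP i hin, ← hCP (i - 1) (by omega)]
  exact congrArg Prod.fst (hdiff j hj i hlo hhi)

/-- With `dᵢ = p_{i−1} − pᵢ` along the Bezout chain of `(p, q)`, and
`[r₀, …, r_k]⁻ = −p/q` with all `rᵢ ≤ −2`: the sequence `(d₁, …, d_n)` is
weakly decreasing, and `{1, …, n}` is partitioned into consecutive intervals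
`I_k, I_{k−1}, …, I₀` (in this order, some possibly empty; interval `I_j` is
`(c (j+1), c j]`) with `|I_k| = −r_k − 1` and `|I_j| = −r_j − 2` for `j < k`,
such that `d` is constant on each interval (value `v j` on `I_j`) and the
values on distinct nonempty intervals are strictly decreasing from `I_k`
to `I₀`. -/
theorem stmt8 (p q : ℤ) (hq : 0 < q) (hqp : q < p) (hco : Int.gcd p q = 1)
    (n : ℕ) (P : ℕ → ℤ × ℤ) (hchain : IsBezoutChain p q n P)
    (d : ℕ → ℤ) (hd : ∀ i, 1 ≤ i → i ≤ n → d i = (P (i - 1)).1 - (P i).1)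
    (k : ℕ) (r : ℕ → ℤ) (hr : ∀ i ≤ k, r i ≤ -2)
    (hval : ncf (List.ofFn fun i : Fin (k + 1) => r i.1) = -(p : ℚ) / (q : ℚ)) :
    (∀ i, 1 ≤ i → i + 1 ≤ n → d (i + 1) ≤ d i) ∧
    ∃ c : ℕ → ℕ, ∃ v : ℕ → ℤ,
      c (k + 1) = 0 ∧ c 0 = n ∧
      (∀ j ≤ k, (c j : ℤ) = (c (j + 1) : ℤ) +
        (if j = k then -r k - 1 else -r j - 2)) ∧
      (∀ j ≤ k, ∀ i, c (j + 1) < i → i ≤ c j → d i = v j) ∧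
      (∀ j j', j ≤ k → j' < j →
        c (j + 1) < c j → c (j' + 1) < c j' → v j' < v j) :=
  stmt8_general p q hq hco n P hchain d hd k r hr hval
end

section
/- Let p > q > 0 be coprime integers with Bezout chain (p₀, q₀), …, (p_n, q_n), set dᵢ = p_{i−1} − pᵢ for 1 ≤ i ≤ n, and let r₀, …, r_k be integers with rᵢ ≤ −2 for all i and [r₀, …, r_k]⁻ = −p/q. Then the number of distinct integers of the form Σ_{i=1}^{n} εᵢ dᵢ, as ε ranges over all functions {1, …, n} → {+1, −1}, equals |(r₀ + 1)(r₁ + 1) ⋯ (r_{k−1} + 1) · r_k|. -/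
open Finset Pointwise

/-!
Write `p/q = [a₀, …, a_k]⁻` with `aᵢ = -rᵢ ≥ 2`. A Bezout step lowers the last entry of the
continued fraction by one, and a last entry `1` is absorbed into its predecessor. Hence the
differences `dᵢ` run through the continuants `uⱼ = K(a₀, …, a_{j-1})` (numerators of
`[a₀, …, a_{j-1}]⁻`), each `uⱼ` repeated `aⱼ - 2` times for `j < k` and `a_k - 1` times for
`j = k`. The `m` signed copies of `u` give the `m + 1` values `(m - 2t)u`, and all signed sums of
the earlier blocks lie strictly between `-uⱼ` and `uⱼ`, since their total is
`uⱼ - u_{j-1} - 1`. So each block multiplies the number of distinct signed sums by exactly its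
length plus one.
-/

section Continuants

variable {a : ℕ → ℕ}

def contSeq (a : ℕ → ℕ) (x₀ x₁ : ℤ) : ℕ → ℤ
  | 0 => x₀
  | 1 => x₁
  | j + 2 => a j * contSeq a x₀ x₁ (j + 1) - contSeq a x₀ x₁ j

def contNum (a : ℕ → ℕ) : ℕ → ℤ := contSeq a 0 1

def contDen (a : ℕ → ℕ) : ℕ → ℤ := contSeq a (-1) 0

lemma contSeq_add_two (x₀ x₁ : ℤ) (j : ℕ) :
    contSeq a x₀ x₁ (j + 2) = a j * contSeq a x₀ x₁ (j + 1) - contSeq a x₀ x₁ j := rfl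

lemma contSeq_eq (x₀ x₁ : ℤ) (j : ℕ) :
    contSeq a x₀ x₁ j = x₁ * contNum a j - x₀ * contDen a j := by
  induction j using Nat.twoStepInduction with
  | zero => simp [contNum, contDen, contSeq]
  | one => simp [contNum, contDen, contSeq]
  | more j ih₀ ih₁ =>
    simp only [contNum, contDen, contSeq_add_two] at *
    rw [ih₀, ih₁]
    ring

lemma contSeq_succ (x₀ x₁ : ℤ) (j : ℕ) :
    contSeq a x₀ x₁ (j + 1) = contSeq (fun i => a (i + 1)) x₁ (a 0 * x₁ - x₀) j := by
  induction j using Nat.twoStepInduction with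
  | zero => rfl
  | one => rfl
  | more j ih₀ ih₁ =>
    rw [show j + 2 + 1 = j + 1 + 2 from rfl, contSeq_add_two, ih₀, ih₁]
    rfl

lemma contNum_succ (j : ℕ) :
    contNum a (j + 1) = a 0 * contNum (fun i => a (i + 1)) j - contDen (fun i => a (i + 1)) j := by
  rw [contNum, contSeq_succ, contSeq_eq]
  ring

lemma contDen_succ (j : ℕ) : contDen a (j + 1) = contNum (fun i => a (i + 1)) j := by
  rw [contDen, contSeq_succ, contSeq_eq]
  ring

lemma contSeq_strictMono (ha : ∀ l, 2 ≤ a l) {x₀ x₁ : ℤ} (h₀₁ : x₀ < x₁) (h₁ : 0 ≤ x₁) :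
    StrictMono (contSeq a x₀ x₁) := by
  have key : ∀ j, contSeq a x₀ x₁ j < contSeq a x₀ x₁ (j + 1) ∧ 0 ≤ contSeq a x₀ x₁ (j + 1) := by
    intro j
    induction j with
    | zero => exact ⟨h₀₁, h₁⟩
    | succ j ih =>
      have : (2 : ℤ) ≤ a j := by exact_mod_cast ha j
      rw [contSeq_add_two]
      constructor <;> nlinarith
  exact strictMono_nat_of_lt_succ fun j => (key j).1

lemma contNum_strictMono (ha : ∀ l, 2 ≤ a l) : StrictMono (contNum a) :=
  contSeq_strictMono ha zero_lt_one zero_le_one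

lemma contDen_strictMono (ha : ∀ l, 2 ≤ a l) : StrictMono (contDen a) :=
  contSeq_strictMono ha neg_one_lt_zero le_rfl

lemma contNum_nonneg (ha : ∀ l, 2 ≤ a l) (j : ℕ) : 0 ≤ contNum a j :=
  (contNum_strictMono ha).monotone (Nat.zero_le j)

lemma contNum_pos (ha : ∀ l, 2 ≤ a l) (j : ℕ) : 0 < contNum a (j + 1) :=
  (contNum_strictMono ha) j.succ_pos

lemma contDen_nonneg (ha : ∀ l, 2 ≤ a l) (j : ℕ) : 0 ≤ contDen a (j + 1) :=
  (contDen_strictMono ha).monotone (Nat.le_add_left 1 j)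

lemma contDen_pos (ha : ∀ l, 2 ≤ a l) (j : ℕ) : 0 < contDen a (j + 2) :=
  (contDen_strictMono ha) (by omega : 1 < j + 2)

lemma contNum_mul_contDen_sub (j : ℕ) :
    contNum a j * contDen a (j + 1) - contNum a (j + 1) * contDen a j = 1 := by
  induction j with
  | zero => rfl
  | succ j ih =>
    simp only [contNum, contDen, contSeq_add_two] at *
    linear_combination ih

lemma isCoprime_contNum_contDen (j : ℕ) : IsCoprime (contNum a (j + 1)) (contDen a (j + 1)) :=
  ⟨-contDen a j, contNum a j, by linear_combination contNum_mul_contDen_sub (a := a) j⟩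

end Continuants

section NegContFrac

variable {a : ℕ → ℕ}

lemma ncf_cons_s10 {L : List ℤ} (hL : L ≠ []) (x : ℤ) : ncf (x :: L) = x - 1 / ncf L := by
  cases L with
  | nil => exact absurd rfl hL
  | cons y t => rfl

theorem ncf_ofFn_neg (ha : ∀ l, 2 ≤ a l) (k : ℕ) :
    ncf (List.ofFn fun i : Fin (k + 1) => -(a i : ℤ)) = -contNum a (k + 2) / contDen a (k + 2) := by
  induction k generalizing a with
  | zero => simp [ncf, contNum, contDen, contSeq]
  | succ k ih =>
    have hU : (contNum (fun i => a (i + 1)) (k + 2) : ℚ) ≠ 0 := by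
      exact_mod_cast (contNum_pos (fun l => ha (l + 1)) (k + 1)).ne'
    rw [List.ofFn_succ, ncf_cons_s10 (by simp), Fin.val_zero]
    simp only [Fin.val_succ]
    rw [ih fun l => ha (l + 1), contNum_succ (k + 2), contDen_succ (k + 2)]
    field_simp
    push_cast
    ring

theorem eq_contNum_contDen_of_ncf (ha : ∀ l, 2 ≤ a l) {k : ℕ} {p q : ℤ} (hq : 0 < q)
    (hco : Int.gcd p q = 1)
    (hval : ncf (List.ofFn fun i : Fin (k + 1) => -(a i : ℤ)) = -(p : ℚ) / q) :
    p = contNum a (k + 2) ∧ q = contDen a (k + 2) := by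
  rw [ncf_ofFn_neg ha, neg_div, neg_div, neg_inj] at hval
  exact Rat.div_int_inj hq (contDen_pos ha k) hco
    (Int.isCoprime_iff_gcd_eq_one.mp (isCoprime_contNum_contDen _)) hval.symm

end NegContFrac

section BezoutChain

variable {p q p' q' : ℤ}

lemma BezoutNext.unique_s10 {x y : ℤ} (h : BezoutNext p q p' q') (h' : BezoutNext p q x y) :
    p' = x ∧ q' = y := by
  obtain ⟨hdet, -, -, hq'0, hq'q⟩ := h
  obtain ⟨hdet', -, -, hy0, hyq⟩ := h'
  have hcop : IsCoprime q p := ⟨-p', q', by linarith⟩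
  obtain ⟨t, ht⟩ : q ∣ q' - y := hcop.dvd_of_dvd_mul_left ⟨p' - x, by linarith⟩
  have ht0 : t = 0 := by
    rcases lt_trichotomy t 0 with h | h | h <;> [nlinarith; exact h; nlinarith]
  have hqy : q' = y := by rw [ht0] at ht; linarith
  subst hqy
  have hq : q ≠ 0 := by linarith
  exact ⟨by simpa [hq, sub_eq_zero] using (by linarith : q * (p' - x) = 0), rfl⟩

lemma IsBezoutChain.length_eq_zero {n : ℕ} {P : ℕ → ℤ × ℤ} (h : IsBezoutChain 1 1 n P) :
    n = 0 :=
  Nat.eq_zero_of_not_pos fun hn => h.2.2.1 0 hn h.1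

lemma IsBezoutChain.tail {n : ℕ} {P : ℕ → ℤ × ℤ} (h : IsBezoutChain p q n P)
    (hnext : BezoutNext p q p' q') :
    ∃ n', n = n' + 1 ∧ IsBezoutChain p' q' n' fun i => P (i + 1) := by
  obtain ⟨h0, hn, hne, hstep⟩ := h
  obtain ⟨n', rfl⟩ : ∃ n', n = n' + 1 := by
    refine Nat.exists_eq_add_one.mpr (Nat.pos_of_ne_zero fun hn0 => ?_)
    subst hn0
    obtain ⟨-, hp'0, hp'p, -⟩ := hnext
    have : p = 1 := by simpa [h0] using congrArg Prod.fst hn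
    omega
  have h1 := hstep 0 n'.succ_pos
  rw [h0] at h1
  obtain ⟨hp', hq'⟩ := hnext.unique_s10 h1
  exact ⟨n', rfl, Prod.ext hp'.symm hq'.symm, hn, fun i hi => hne (i + 1) (by omega),
    fun i hi => hstep (i + 1) (by omega)⟩

end BezoutChain

section SignedSums

def signedSums (n : ℕ) (d : ℕ → ℤ) : Set ℤ :=
  {s | ∃ ε : ℕ → ℤ, (∀ i ∈ Icc 1 n, ε i = 1 ∨ ε i = -1) ∧ s = ∑ i ∈ Icc 1 n, ε i * d i}

lemma sum_Icc_one_succ {M : Type*} [AddCommMonoid M] (f : ℕ → M) (n : ℕ) :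
    ∑ i ∈ Icc 1 (n + 1), f i = f 1 + ∑ i ∈ Icc 1 n, f (i + 1) := by
  rw [← sum_Ioc_add_eq_sum_Icc (by omega), add_comm, ← Icc_add_one_left_eq_Ioc,
    ← map_add_right_Icc, sum_map]
  rfl

lemma signedSums_zero (d : ℕ → ℤ) : signedSums 0 d = {0} := by
  ext s
  simp [signedSums]

lemma signedSums_succ (n : ℕ) (d : ℕ → ℤ) :
    signedSums (n + 1) d = {d 1, -d 1} + signedSums n fun i => d (i + 1) := by
  ext s
  simp only [signedSums, Set.mem_add, Set.mem_insert_iff, Set.mem_singleton_iff,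
    Set.mem_ofPred_eq, sum_Icc_one_succ]
  constructor
  · rintro ⟨ε, hε, rfl⟩
    refine ⟨ε 1 * d 1, ?_, _, ⟨fun i => ε (i + 1), fun i hi => hε (i + 1) ?_, rfl⟩, rfl⟩
    · rcases hε 1 (by simp) with h | h <;> simp [h]
    · simp only [mem_Icc] at hi ⊢; omega
  · rintro ⟨x, hx, _, ⟨ε, hε, rfl⟩, rfl⟩
    obtain ⟨e, he, rfl⟩ : ∃ e : ℤ, (e = 1 ∨ e = -1) ∧ x = e * d 1 := by
      rcases hx with rfl | rfl
      exacts [⟨1, by simp⟩, ⟨-1, by simp⟩]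
    refine ⟨fun i => if i = 1 then e else ε (i - 1), fun i hi => ?_, ?_⟩
    · dsimp only
      split_ifs
      · exact he
      · exact hε (i - 1) (by simp only [mem_Icc] at hi ⊢; omega)
    · dsimp only
      rw [if_pos rfl, add_right_inj]
      refine sum_congr rfl fun i hi => ?_
      rw [if_neg (by simp only [mem_Icc] at hi; omega), Nat.add_sub_cancel]

def HasChainSums (p q : ℤ) (S : Set ℤ) : Prop :=
  ∀ n P d, IsBezoutChain p q n P → (∀ i, 1 ≤ i → i ≤ n → d i = (P (i - 1)).1 - (P i).1) →
    signedSums n d = S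

lemma hasChainSums_one_one : HasChainSums 1 1 {0} := by
  intro n P d hchain _
  rw [hchain.length_eq_zero, signedSums_zero]

lemma HasChainSums.of_bezoutNext {p q p' q' : ℤ} {S : Set ℤ} (h : HasChainSums p' q' S)
    (hnext : BezoutNext p q p' q') : HasChainSums p q ({p - p', -(p - p')} + S) := by
  intro n P d hchain hd
  obtain ⟨n', rfl, htail⟩ := hchain.tail hnext
  have hd1 : d 1 = p - p' := by
    have hP1 : P 1 = (p', q') := htail.1
    rw [hd 1 le_rfl (by omega), Nat.sub_self, hchain.1, hP1]
  rw [signedSums_succ, hd1, h n' _ _ htail fun i hi hin => ?_]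
  rw [hd (i + 1) (by omega) (by omega), Nat.sub_add_cancel hi]
  rfl

end SignedSums

section SignedSumsReplicate

def signedSumsReplicate (u : ℤ) (m : ℕ) : Finset ℤ :=
  (range (m + 1)).image fun t : ℕ => ((m : ℤ) - 2 * t) * u

lemma signedSumsReplicate_zero (u : ℤ) : signedSumsReplicate u 0 = 0 := by
  simp [signedSumsReplicate]
  rfl

lemma signedSumsReplicate_succ (u : ℤ) (m : ℕ) :
    signedSumsReplicate u (m + 1) = {u, -u} + signedSumsReplicate u m := by
  ext s
  simp only [signedSumsReplicate, mem_add, mem_image, mem_range, mem_insert, mem_singleton]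
  constructor
  · rintro ⟨t, ht, rfl⟩
    rcases Nat.lt_succ_iff_lt_or_eq.mp ht with ht | rfl
    · exact ⟨u, Or.inl rfl, _, ⟨t, ht, rfl⟩, by push_cast; ring⟩
    · exact ⟨-u, Or.inr rfl, _, ⟨m, m.lt_succ_self, rfl⟩, by push_cast; ring⟩
  · rintro ⟨x, rfl | rfl, _, ⟨t, ht, rfl⟩, rfl⟩
    · exact ⟨t, by omega, by push_cast; ring⟩
    · exact ⟨t + 1, by omega, by push_cast; ring⟩

lemma abs_le_of_mem_signedSumsReplicate {u s : ℤ} {m : ℕ} (hu : 0 ≤ u)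
    (hs : s ∈ signedSumsReplicate u m) : |s| ≤ m * u := by
  obtain ⟨t, ht, rfl⟩ := mem_image.mp hs
  have ht : (t : ℤ) ≤ m := by simp only [mem_range] at ht; omega
  rw [abs_mul, abs_of_nonneg hu]
  exact mul_le_mul_of_nonneg_right (abs_le.mpr ⟨by linarith, by linarith⟩) hu

lemma card_signedSumsReplicate {u : ℤ} (hu : u ≠ 0) (m : ℕ) :
    #(signedSumsReplicate u m) = m + 1 := by
  rw [signedSumsReplicate, card_image_of_injective _ fun t t' h => ?_, card_range]
  exact_mod_cast (by simpa [hu] using h : (t : ℤ) = t')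

lemma card_signedSumsReplicate_add {u : ℤ} {B : Finset ℤ} (hu : 0 < u) (hB : ∀ b ∈ B, |b| < u)
    (m : ℕ) : #(signedSumsReplicate u m + B) = (m + 1) * #B := by
  rw [card_add_iff.mpr, card_signedSumsReplicate hu.ne']
  rintro ⟨_, b⟩ hx ⟨_, b'⟩ hx' h
  simp only [Set.mem_prod, signedSumsReplicate, coe_image, Set.mem_image] at hx hx' h
  obtain ⟨⟨t, -, rfl⟩, hb⟩ := hx
  obtain ⟨⟨t', -, rfl⟩, hb'⟩ := hx'
  obtain ⟨hb₁, hb₂⟩ := abs_lt.mp (hB b hb)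
  obtain ⟨hb'₁, hb'₂⟩ := abs_lt.mp (hB b' hb')
  -- the translates of `B` by distinct multiples of `2u` are disjoint
  have htt : (t : ℤ) = t' := by
    rcases lt_trichotomy (t : ℤ) t' with h' | h' | h'
    · nlinarith
    · exact h'
    · nlinarith
  have hbb : b = b' := by rw [htt] at h; linarith
  rw [htt, hbb]

end SignedSumsReplicate

section ChainStates

variable {a : ℕ → ℕ}

/-- `cfState a j m` is the reduced fraction `[a₀, …, a_{j-1}, m + 1]⁻`. -/
def cfState (a : ℕ → ℕ) (j m : ℕ) : ℤ × ℤ :=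
  ((m + 1) * contNum a (j + 1) - contNum a j, (m + 1) * contDen a (j + 1) - contDen a j)

lemma cfState_zero_zero : cfState a 0 0 = (1, 1) := by
  simp [cfState, contNum, contDen, contSeq]

lemma cfState_succ_zero (ha : ∀ l, 2 ≤ a l) (j : ℕ) :
    cfState a (j + 1) 0 = cfState a j (a j - 2) := by
  have hcast : ((a j - 2 : ℕ) : ℤ) = a j - 2 := by have := ha j; omega
  simp only [cfState, hcast, contNum, contDen, contSeq_add_two]
  ext <;> ring

lemma cfState_last (ha : ∀ l, 2 ≤ a l) (k : ℕ) :
    cfState a k (a k - 1) = (contNum a (k + 2), contDen a (k + 2)) := by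
  have hcast : ((a k - 1 : ℕ) : ℤ) = a k - 1 := by have := ha k; omega
  simp only [cfState, hcast, contNum, contDen, contSeq_add_two]
  ext <;> ring

lemma bezoutNext_cfState (ha : ∀ l, 2 ≤ a l) (j m : ℕ) :
    BezoutNext (cfState a j (m + 1)).1 (cfState a j (m + 1)).2
      (cfState a j m).1 (cfState a j m).2 := by
  have hU := contNum_strictMono ha j.lt_succ_self
  have hU₀ := contNum_nonneg ha j
  have hV := contDen_strictMono ha j.lt_succ_self
  have hV₀ := contDen_nonneg ha j
  have hdet := contNum_mul_contDen_sub (a := a) j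
  simp only [cfState]
  push_cast
  refine ⟨by linear_combination hdet, ?_, ?_, ?_, ?_⟩ <;> nlinarith

def chainSums (a : ℕ → ℕ) : ℕ → ℕ → Finset ℤ
  | 0, m => signedSumsReplicate (contNum a 1) m
  | j + 1, m => signedSumsReplicate (contNum a (j + 2)) m + chainSums a j (a j - 2)

lemma chainSums_succ (j m : ℕ) :
    chainSums a j (m + 1) = {contNum a (j + 1), -contNum a (j + 1)} + chainSums a j m := by
  cases j <;> simp only [chainSums, signedSumsReplicate_succ, add_assoc]

lemma chainSums_succ_zero (j : ℕ) : chainSums a (j + 1) 0 = chainSums a j (a j - 2) := by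
  rw [chainSums, signedSumsReplicate_zero, zero_add]

lemma abs_le_of_mem_chainSums (ha : ∀ l, 2 ≤ a l) {j m : ℕ} {s : ℤ} (hs : s ∈ chainSums a j m) :
    |s| ≤ (cfState a j m).1 - 1 := by
  induction j generalizing m s with
  | zero =>
    have := abs_le_of_mem_signedSumsReplicate zero_le_one hs
    simp only [cfState, contNum, contSeq] at this ⊢
    linarith
  | succ j ih =>
    obtain ⟨x, hx, y, hy, rfl⟩ := mem_add.mp hs
    have hx := abs_le_of_mem_signedSumsReplicate (contNum_nonneg ha _) hx
    have hy := ih hy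
    rw [← cfState_succ_zero ha] at hy
    simp only [cfState] at hy ⊢
    push_cast at hx hy ⊢
    linarith [abs_add_le x y]

lemma card_chainSums (ha : ∀ l, 2 ≤ a l) (j m : ℕ) :
    #(chainSums a j m) = (m + 1) * ∏ l ∈ range j, (a l - 1) := by
  induction j generalizing m with
  | zero =>
    rw [chainSums, card_signedSumsReplicate (contNum_pos ha 0).ne', prod_range_zero, mul_one]
  | succ j ih =>
    have hB : ∀ s ∈ chainSums a j (a j - 2), |s| < contNum a (j + 2) := fun s hs => by
      have := abs_le_of_mem_chainSums ha hs
      rw [← cfState_succ_zero ha] at this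
      simp only [cfState] at this
      push_cast at this
      linarith [contNum_nonneg ha (j + 1)]
    rw [chainSums, card_signedSumsReplicate_add (contNum_pos ha (j + 1)) hB, ih, prod_range_succ,
      show a j - 2 + 1 = a j - 1 by have := ha j; omega]
    ring

lemma hasChainSums_cfState_succ (ha : ∀ l, 2 ≤ a l) {j m : ℕ}
    (h : HasChainSums (cfState a j m).1 (cfState a j m).2 (chainSums a j m)) :
    HasChainSums (cfState a j (m + 1)).1 (cfState a j (m + 1)).2 (chainSums a j (m + 1)) := by
  convert h.of_bezoutNext (bezoutNext_cfState ha j m) using 1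
  rw [chainSums_succ, coe_add, coe_pair]
  congr 3 <;> simp only [cfState] <;> push_cast <;> ring

theorem hasChainSums_cfState (ha : ∀ l, 2 ≤ a l) (j m : ℕ) :
    HasChainSums (cfState a j m).1 (cfState a j m).2 (chainSums a j m) := by
  induction j generalizing m with
  | zero =>
    induction m with
    | zero =>
      rw [cfState_zero_zero, chainSums, signedSumsReplicate_zero, coe_zero, ← Set.singleton_zero]
      exact hasChainSums_one_one
    | succ m ih => exact hasChainSums_cfState_succ ha ih
  | succ j ihj =>
    induction m with
    | zero =>
      rw [cfState_succ_zero ha, chainSums_succ_zero]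
      exact ihj (a j - 2)
    | succ m ih => exact hasChainSums_cfState_succ ha ih

end ChainStates

theorem stmt10_general (p q : ℤ) (hq : 0 < q) (hco : Int.gcd p q = 1)
    (n : ℕ) (P : ℕ → ℤ × ℤ) (hchain : IsBezoutChain p q n P)
    (d : ℕ → ℤ) (hd : ∀ i, 1 ≤ i → i ≤ n → d i = (P (i - 1)).1 - (P i).1)
    (k : ℕ) (r : ℕ → ℤ) (hr : ∀ i ≤ k, r i ≤ -2)
    (hval : ncf (List.ofFn fun i : Fin (k + 1) => r i.1) = -(p : ℚ) / (q : ℚ)) :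
    Set.ncard {s : ℤ | ∃ ε : ℕ → ℤ,
        (∀ i ∈ Finset.Icc 1 n, ε i = 1 ∨ ε i = -1) ∧
        s = ∑ i ∈ Finset.Icc 1 n, ε i * d i}
      = ((∏ i ∈ Finset.range k, (r i + 1)) * r k).natAbs := by
  obtain ⟨a, ha, hra⟩ : ∃ a : ℕ → ℕ, (∀ l, 2 ≤ a l) ∧ ∀ i ≤ k, r i = -(a i : ℤ) :=
    ⟨fun l => max 2 (-r l).toNat, fun l => le_max_left _ _, fun i hi => by
      have := hr i hi
      dsimp only
      omega⟩
  have hval' : ncf (List.ofFn fun i : Fin (k + 1) => -(a i : ℤ)) = -(p : ℚ) / q := by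
    rw [← hval]
    congr 2
    exact funext fun i => (hra i (Nat.lt_succ_iff.mp i.2)).symm
  obtain ⟨hpU, hqV⟩ := eq_contNum_contDen_of_ncf ha hq hco hval'
  have hsums := hasChainSums_cfState ha k (a k - 1) n P d
    (by rwa [cfState_last ha, ← hpU, ← hqV]) hd
  change (signedSums n d).ncard = _
  rw [hsums, Set.ncard_coe_finset,
    card_chainSums ha, Nat.sub_add_cancel (one_le_two.trans (ha k)), Int.natAbs_mul,
    ← Int.natAbsHom_apply, map_prod, mul_comm]
  congr 1
  · refine prod_congr rfl fun i hi => ?_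
    rw [Int.natAbsHom_apply, hra i (by simp only [mem_range] at hi; omega)]
    have := ha i
    omega
  · rw [hra k le_rfl]
    omega

/-- With `dᵢ = p_{i−1} − pᵢ` along the Bezout chain of `(p, q)` and
`[r₀, …, r_k]⁻ = −p/q` with all `rᵢ ≤ −2`: the number of distinct integers of
the form `Σ_{i=1}^{n} εᵢ dᵢ`, over all sign choices `ε : {1, …, n} → {±1}`,
equals `|(r₀ + 1)(r₁ + 1) ⋯ (r_{k−1} + 1) · r_k|`. -/
theorem stmt10 (p q : ℤ) (hq : 0 < q) (hqp : q < p) (hco : Int.gcd p q = 1)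
    (n : ℕ) (P : ℕ → ℤ × ℤ) (hchain : IsBezoutChain p q n P)
    (d : ℕ → ℤ) (hd : ∀ i, 1 ≤ i → i ≤ n → d i = (P (i - 1)).1 - (P i).1)
    (k : ℕ) (r : ℕ → ℤ) (hr : ∀ i ≤ k, r i ≤ -2)
    (hval : ncf (List.ofFn fun i : Fin (k + 1) => r i.1) = -(p : ℚ) / (q : ℚ)) :
    Set.ncard {s : ℤ | ∃ ε : ℕ → ℤ,
        (∀ i ∈ Finset.Icc 1 n, ε i = 1 ∨ ε i = -1) ∧
        s = ∑ i ∈ Finset.Icc 1 n, ε i * d i}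
      = ((∏ i ∈ Finset.range k, (r i + 1)) * r k).natAbs :=
  stmt10_general p q hq hco n P hchain d hd k r hr hval
end
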